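/- Let A be an N×N Hermitian complex matrix and let k ≥ 1 be an integer. Then the rank-k numerical range Λ_k(A) is a convex subset of ℂ. -/

import Mathlib

open Matrix Complex

/-- The rank-k numerical range of a square complex matrix `T`:
all `λ ∈ ℂ` such that `P T P = λ P` for some orthogonal projection `P` of rank `k`. -/
def rankKRange {n : Type*} [Fintype n] [DecidableEq n]
    (k : ℕ) (T : Matrix n n ℂ) : Set ℂ :=
  {lam : ℂ | ∃ P : Matrix n n ℂ,
    P.IsHermitian ∧ P * P = P ∧ P.rank = k ∧ P * T * P = lam • P}

/-!
Conjugating by a unitary diagonalizes `A`, so let `A = diag e` with `e` real. If `P` is a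
rank-`k` projection with `PAP = λP` and `S` is any subspace of dimension `> N - k`, then `S`
meets the range of `P` in some `x ≠ 0`, and `x* A x = λ x* x`. Taking `S = ℂᴺ` shows that `λ`
is real. Taking for `S` the coordinate subspace of the entries `e i < λ` shows that at least `k`
entries are `≥ λ`, and symmetrically at least `k` entries are `≤ λ`.

Conversely, if this holds for a real `r`, pair off entries `e (g j) > r > e (l j)` and write
`r = a e (l j) + b e (g j)` as a convex combination. The unit vectors `√b δ_{g j} + √a δ_{l j}`,
together with the `δ_i` with `e i = r`, have disjoint supports and satisfy `x* A x = r`; there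
are at least `k` of them, and the projection onto the span of `k` of them shows `r ∈ Λ_k(A)`.
So `Λ_k(A)` is the image in `ℂ` of an interval of reals.
-/

open Module
open scoped ComplexOrder

section General

variable {n m : Type*} [Fintype n] [DecidableEq n] [Fintype m] {k : ℕ} {T : Matrix n n ℂ}
  {lam : ℂ}

theorem mem_rankKRange_card_of_conjTranspose_mul_self_eq_one [DecidableEq m]
    (V : Matrix n m ℂ) (hV : Vᴴ * V = 1) (hT : Vᴴ * T * V = lam • 1) :
    lam ∈ rankKRange (Fintype.card m) T := by
  refine ⟨V * Vᴴ, by simp [IsHermitian, conjTranspose_mul], ?_, ?_, ?_⟩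
  · rw [Matrix.mul_assoc, ← Matrix.mul_assoc Vᴴ, hV, Matrix.one_mul]
  · rw [rank_self_mul_conjTranspose, ← rank_conjTranspose_mul_self, hV, rank_one]
  · calc V * Vᴴ * T * (V * Vᴴ) = V * (Vᴴ * T * V) * Vᴴ := by simp only [Matrix.mul_assoc]
      _ = lam • (V * Vᴴ) := by rw [hT, Matrix.mul_smul, Matrix.mul_one, Matrix.smul_mul]

theorem mem_rankKRange_of_conjTranspose_mul_self_eq_one [DecidableEq m] (V : Matrix n m ℂ)
    (hV : Vᴴ * V = 1) (hT : Vᴴ * T * V = lam • 1) (hk : k ≤ Fintype.card m) :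
    lam ∈ rankKRange k T := by
  obtain ⟨f⟩ : Nonempty (Fin k ↪ m) :=
    Function.Embedding.nonempty_of_card_le (by simpa using hk)
  have hcompress (M : Matrix n n ℂ) :
      (V.submatrix id f)ᴴ * M * V.submatrix id f = (Vᴴ * M * V).submatrix f f := by
    rw [conjTranspose_submatrix, submatrix_mul _ _ _ _ _ Function.bijective_id,
      submatrix_mul _ _ _ _ _ Function.bijective_id, submatrix_id_id]
  simpa using mem_rankKRange_card_of_conjTranspose_mul_self_eq_one (V.submatrix id f)
    (by simpa [hV, submatrix_one_embedding] using hcompress 1)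
    (by rw [hcompress, hT, submatrix_smul, Pi.smul_apply, Pi.smul_apply,
      submatrix_one_embedding])

theorem rankKRange_subset_conjStarAlgAut (U : unitary (Matrix n n ℂ)) (T : Matrix n n ℂ) :
    rankKRange k T ⊆ rankKRange k (Unitary.conjStarAlgAut ℂ _ U T) := by
  rintro lam ⟨P, hPh, hPP, hPr, hPT⟩
  set φ := Unitary.conjStarAlgAut ℂ (Matrix n n ℂ) U
  refine ⟨φ P, ?_, by rw [← map_mul, hPP], ?_,
    by rw [← map_mul, ← map_mul, hPT, map_smul]⟩
  · rw [IsHermitian, ← star_eq_conjTranspose, ← map_star, star_eq_conjTranspose, hPh.eq]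
  · rw [Unitary.conjStarAlgAut_apply, ← Unitary.coe_star,
      rank_mul_eq_left_of_isUnit_det _ _ (UnitaryGroup.det_isUnit (star U)),
      rank_mul_eq_right_of_isUnit_det _ _ (UnitaryGroup.det_isUnit U), hPr]

theorem rankKRange_conjStarAlgAut (U : unitary (Matrix n n ℂ)) (T : Matrix n n ℂ) :
    rankKRange k (Unitary.conjStarAlgAut ℂ _ U T) = rankKRange k T := by
  refine (Set.Subset.antisymm (rankKRange_subset_conjStarAlgAut U T) ?_).symm
  have := rankKRange_subset_conjStarAlgAut (k := k) (star U) (Unitary.conjStarAlgAut ℂ _ U T)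
  rwa [← Unitary.conjStarAlgAut_symm, StarAlgEquiv.symm_apply_apply] at this

theorem neg_mem_rankKRange_neg (h : lam ∈ rankKRange k T) : -lam ∈ rankKRange k (-T) := by
  obtain ⟨P, hPh, hPP, hPr, hPT⟩ := h
  exact ⟨P, hPh, hPP, hPr, by rw [Matrix.mul_neg, Matrix.neg_mul, hPT, neg_smul]⟩

theorem exists_ne_zero_star_dotProduct_mulVec_eq (h : lam ∈ rankKRange k T)
    {S : Submodule ℂ (n → ℂ)} (hS : Fintype.card n < k + finrank ℂ S) :
    ∃ x ∈ S, x ≠ 0 ∧ star x ⬝ᵥ (T *ᵥ x) = lam * (star x ⬝ᵥ x) := by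
  obtain ⟨P, hPh, hPP, hPr, hPT⟩ := h
  set W := LinearMap.range P.mulVecLin
  have hW : finrank ℂ W = k := hPr
  have hWS : W ⊓ S ≠ ⊥ := fun hbot => by
    have hsum := Submodule.finrank_sup_add_finrank_inf_eq W S
    have hsup := Submodule.finrank_le (W ⊔ S)
    rw [hbot, finrank_bot, finrank_fintype_fun_eq_card] at *
    omega
  obtain ⟨x, ⟨⟨y, rfl⟩, hxS⟩, hx0⟩ := Submodule.exists_mem_ne_zero_of_ne_bot hWS
  set x := P *ᵥ y
  have hPx : P *ᵥ x = x := by rw [mulVec_mulVec, hPP]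
  refine ⟨x, hxS, hx0, ?_⟩
  calc star x ⬝ᵥ (T *ᵥ x) = star (P *ᵥ x) ⬝ᵥ (T *ᵥ (P *ᵥ x)) := by rw [hPx]
    _ = star x ⬝ᵥ ((P * T * P) *ᵥ x) := by
      rw [star_mulVec, ← dotProduct_mulVec, hPh.eq, mulVec_mulVec, mulVec_mulVec,
        Matrix.mul_assoc]
    _ = lam * (star x ⬝ᵥ x) := by rw [hPT, smul_mulVec, hPx, dotProduct_smul, smul_eq_mul]

end General

theorem star_dotProduct_self_eq_sum_normSq {n : Type*} [Fintype n] (x : n → ℂ) :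
    star x ⬝ᵥ x = ((∑ i, normSq (x i) : ℝ) : ℂ) := by
  push_cast
  exact Finset.sum_congr rfl fun i _ => (normSq_eq_conj_mul_self).symm

theorem sum_normSq_pos {n : Type*} [Fintype n] {x : n → ℂ} (hx : x ≠ 0) :
    0 < ∑ i, normSq (x i) := by
  obtain ⟨i, hi⟩ := Function.ne_iff.mp hx
  exact Finset.sum_pos' (fun i _ => normSq_nonneg _) ⟨i, Finset.mem_univ _, normSq_pos.mpr hi⟩

theorem conjTranspose_mul_diagonal_mul_of_disjoint {n m R : Type*} [Fintype n] [DecidableEq n]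
    [DecidableEq m] [CommSemiring R] [StarRing R] (V : Matrix n m R)
    (hV : ∀ i c c', c ≠ c' → V i c = 0 ∨ V i c' = 0) (d : n → R) :
    Vᴴ * diagonal d * V = diagonal fun c => ∑ i, star (V i c) * d i * V i c := by
  ext c c'
  rw [mul_apply]
  simp only [mul_diagonal, conjTranspose_apply, diagonal_apply]
  split_ifs with h
  · rw [h]
  · refine Finset.sum_eq_zero fun i _ => ?_
    rcases hV i c c' h with h0 | h0 <;> simp [h0]

section Pairing

variable {n ζ ι : Type*} [DecidableEq n] (z : ζ → n) (g l : ι → n) (a b : ι → ℝ)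

noncomputable def pairingMatrix : Matrix n (ζ ⊕ ι) ℂ :=
  of fun i c => c.elim (fun s => if i = z s then 1 else 0)
    (fun j => if i = g j then (√(b j) : ℂ) else if i = l j then (√(a j) : ℂ) else 0)

theorem conjTranspose_pairingMatrix_mul_diagonal_mul [Fintype n] [DecidableEq ζ] [DecidableEq ι]
    (hinj : (Sum.elim z (Sum.elim g l)).Injective) (ha : ∀ j, 0 ≤ a j) (hb : ∀ j, 0 ≤ b j)
    (d : n → ℝ) :
    (pairingMatrix z g l a b)ᴴ * diagonal (fun i => (d i : ℂ)) * pairingMatrix z g l a b =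
      diagonal (Sum.elim (fun s => (d (z s) : ℂ))
        fun j => ((a j * d (l j) + b j * d (g j) : ℝ) : ℂ)) := by
  simp only [Sum.elim_injective, Sum.forall, Sum.elim_inl, Sum.elim_inr] at hinj
  obtain ⟨hz, ⟨hg, hl, hgl⟩, hzgl⟩ := hinj
  set V := pairingMatrix z g l a b
  have hsupp_inl (i : n) (s : ζ) (h : V i (.inl s) ≠ 0) : i = z s := by
    by_contra hi
    simp [V, pairingMatrix, hi] at h
  have hsupp_inr (i : n) (j : ι) (h : V i (.inr j) ≠ 0) : i = g j ∨ i = l j := by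
    by_contra! hi
    simp [V, pairingMatrix, hi.1, hi.2] at h
  have hV : ∀ i c c', c ≠ c' → V i c = 0 ∨ V i c' = 0 := by
    intro i c c' hcc'
    by_contra! ⟨h1, h2⟩
    rcases c with s | j <;> rcases c' with s' | j' <;> grind
  rw [conjTranspose_mul_diagonal_mul_of_disjoint V hV]
  congr 1
  ext (s | j)
  · simp [V, pairingMatrix]
  · rw [Fintype.sum_eq_add (g j) (l j) (hgl j j) fun i hi => by
      simp [V, pairingMatrix, hi.1, hi.2]]
    have hsq {x : ℝ} (hx : 0 ≤ x) (y : ℂ) : star (√x : ℂ) * y * √x = x * y := by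
      rw [star_def, conj_ofReal, mul_comm, ← mul_assoc, ← ofReal_mul, Real.mul_self_sqrt hx]
    simp only [V, pairingMatrix, of_apply, Sum.elim_inr, if_pos, if_neg (hgl j j).symm]
    rw [hsq (hb j), hsq (ha j), add_comm]
    push_cast
    ring

end Pairing

section Diagonal

variable {n : Type*} [Fintype n] [DecidableEq n] (e : n → ℝ) {k : ℕ}

theorem star_dotProduct_diagonal_mulVec (x : n → ℂ) :
    star x ⬝ᵥ (diagonal (fun i => (e i : ℂ)) *ᵥ x) =
      ((∑ i, e i * normSq (x i) : ℝ) : ℂ) := by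
  push_cast
  refine Finset.sum_congr rfl fun i _ => ?_
  rw [mulVec_diagonal, normSq_eq_conj_mul_self, Pi.star_apply, star_def]
  ring

theorem exists_ofReal_eq_of_mem_rankKRange_diagonal (hk : 0 < k) {lam : ℂ}
    (h : lam ∈ rankKRange k (diagonal fun i => (e i : ℂ))) : ∃ r : ℝ, (r : ℂ) = lam := by
  obtain ⟨x, -, hx0, hx⟩ := exists_ne_zero_star_dotProduct_mulVec_eq h (S := ⊤)
    (by rw [finrank_top, finrank_fintype_fun_eq_card]; omega)
  rw [star_dotProduct_diagonal_mulVec, star_dotProduct_self_eq_sum_normSq] at hx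
  have hpos := sum_normSq_pos hx0
  refine ⟨(∑ i, e i * normSq (x i)) / ∑ i, normSq (x i), ?_⟩
  rw [ofReal_div, hx, mul_div_cancel_right₀ _ (ofReal_ne_zero.mpr hpos.ne')]

theorem le_card_ge_of_ofReal_mem_rankKRange_diagonal {r : ℝ}
    (h : (r : ℂ) ∈ rankKRange k (diagonal fun i => (e i : ℂ))) :
    k ≤ Fintype.card {i // r ≤ e i} := by
  by_contra! hlt
  set f := LinearMap.funLeft ℂ ℂ (Subtype.val : {i // r ≤ e i} → n)
  have hker : Fintype.card n < k + finrank ℂ (LinearMap.ker f) := by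
    have hsum := f.finrank_range_add_finrank_ker
    have hrange := Submodule.finrank_le (LinearMap.range f)
    rw [finrank_fintype_fun_eq_card] at hsum hrange
    omega
  obtain ⟨x, hxS, hx0, hx⟩ := exists_ne_zero_star_dotProduct_mulVec_eq h hker
  have hx_upper (i : n) (hi : r ≤ e i) : x i = 0 := congrFun hxS ⟨i, hi⟩
  rw [star_dotProduct_diagonal_mulVec, star_dotProduct_self_eq_sum_normSq, ← ofReal_mul,
    ofReal_inj, Finset.mul_sum, eq_comm, ← sub_eq_zero, ← Finset.sum_sub_distrib] at hx
  simp only [← sub_mul] at hx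
  have hterm_nonneg (i : n) : 0 ≤ (r - e i) * normSq (x i) := by
    rcases le_or_gt r (e i) with hi | hi
    · simp [hx_upper i hi]
    · exact mul_nonneg (by linarith) (normSq_nonneg _)
  have hterm := (Finset.sum_eq_zero_iff_of_nonneg fun i _ => hterm_nonneg i).mp hx
  refine hx0 (funext fun i => ?_)
  rcases le_or_gt r (e i) with hi | hi
  · exact hx_upper i hi
  · simpa [(sub_pos.mpr hi).ne'] using hterm i (Finset.mem_univ _)

theorem le_card_le_of_ofReal_mem_rankKRange_diagonal {r : ℝ}
    (h : (r : ℂ) ∈ rankKRange k (diagonal fun i => (e i : ℂ))) :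
    k ≤ Fintype.card {i // e i ≤ r} := by
  have hneg := neg_mem_rankKRange_neg h
  rw [diagonal_neg, ← ofReal_neg] at hneg
  simpa using le_card_ge_of_ofReal_mem_rankKRange_diagonal (-e) (r := -r) (by simpa using hneg)

theorem ofReal_mem_rankKRange_diagonal_of_pairing {ι : Type*} [Fintype ι] [DecidableEq ι]
    {r : ℝ} (g l : ι → n) (hg : g.Injective) (hl : l.Injective) (hgr : ∀ j, r < e (g j))
    (hlr : ∀ j, e (l j) < r) (hk : k ≤ Fintype.card {i // e i = r} + Fintype.card ι) :
    (r : ℂ) ∈ rankKRange k (diagonal fun i => (e i : ℂ)) := by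
  have hseg (j : ι) : r ∈ segment ℝ (e (l j)) (e (g j)) := by
    rw [segment_eq_Icc ((hlr j).trans (hgr j)).le]
    exact ⟨(hlr j).le, (hgr j).le⟩
  choose a b ha hb hab hcomb using hseg
  have hinj : (Sum.elim (Subtype.val : {i // e i = r} → n) (Sum.elim g l)).Injective := by
    refine Subtype.val_injective.sumElim
      (hg.sumElim hl fun j j' h => ((hlr j').trans (hgr j)).ne' (by rw [h])) ?_
    rintro ⟨i, hi⟩ (j | j) rfl
    · exact (hgr j).ne' hi
    · exact (hlr j).ne hi
  have hcompress := conjTranspose_pairingMatrix_mul_diagonal_mul _ _ _ a b hinj ha hb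
  refine mem_rankKRange_of_conjTranspose_mul_self_eq_one
    (pairingMatrix (Subtype.val : {i // e i = r} → n) g l a b) ?_ ?_ (by rwa [Fintype.card_sum])
  · convert hcompress 1 using 1
    · simp
    · rw [← diagonal_one]
      congr 1
      ext (z | j) <;> simp [hab]
  · rw [hcompress, smul_one_eq_diagonal]
    congr 1
    ext (z | j)
    · simp [z.2]
    · simp only [Sum.elim_inr, ← smul_eq_mul, hcomb]

theorem ofReal_mem_rankKRange_diagonal {r : ℝ} (hge : k ≤ Fintype.card {i // r ≤ e i})
    (hle : k ≤ Fintype.card {i // e i ≤ r}) :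
    (r : ℂ) ∈ rankKRange k (diagonal fun i => (e i : ℂ)) := by
  set m := min (Fintype.card {i // r < e i}) (Fintype.card {i // e i < r})
  obtain ⟨g⟩ : Nonempty (Fin m ↪ {i // r < e i}) :=
    Function.Embedding.nonempty_of_card_le (by simp [m])
  obtain ⟨l⟩ : Nonempty (Fin m ↪ {i // e i < r}) :=
    Function.Embedding.nonempty_of_card_le (by simp [m])
  have hge' : Fintype.card {i // r ≤ e i} ≤
      Fintype.card {i // r < e i} + Fintype.card {i // e i = r} :=
    (Fintype.card_congr (Equiv.subtypeEquivRight fun i => by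
      rw [le_iff_lt_or_eq, eq_comm])).trans_le (Fintype.card_subtype_or _ _)
  have hle' : Fintype.card {i // e i ≤ r} ≤
      Fintype.card {i // e i < r} + Fintype.card {i // e i = r} :=
    (Fintype.card_congr (Equiv.subtypeEquivRight fun i => le_iff_lt_or_eq)).trans_le
      (Fintype.card_subtype_or _ _)
  refine ofReal_mem_rankKRange_diagonal_of_pairing e (fun j => g j) (fun j => l j)
    (Subtype.val_injective.comp g.injective) (Subtype.val_injective.comp l.injective)
    (fun j => (g j).2) (fun j => (l j).2) ?_
  rw [Fintype.card_fin]
  omega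

theorem rankKRange_diagonal (hk : 0 < k) :
    rankKRange k (diagonal fun i => (e i : ℂ)) =
      ofReal '' {r | k ≤ Fintype.card {i // r ≤ e i} ∧ k ≤ Fintype.card {i // e i ≤ r}} := by
  ext lam
  constructor
  · intro h
    obtain ⟨r, rfl⟩ := exists_ofReal_eq_of_mem_rankKRange_diagonal e hk h
    exact ⟨r, ⟨le_card_ge_of_ofReal_mem_rankKRange_diagonal e h,
      le_card_le_of_ofReal_mem_rankKRange_diagonal e h⟩, rfl⟩
  · rintro ⟨r, ⟨hge, hle⟩, rfl⟩
    exact ofReal_mem_rankKRange_diagonal e hge hle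

end Diagonal

theorem Matrix.IsHermitian.rankKRange_eq {n : Type*} [Fintype n] [DecidableEq n]
    {A : Matrix n n ℂ} (hA : A.IsHermitian) {k : ℕ} (hk : 0 < k) :
    rankKRange k A = ofReal '' {r | k ≤ Fintype.card {i // r ≤ hA.eigenvalues i} ∧
      k ≤ Fintype.card {i // hA.eigenvalues i ≤ r}} := by
  conv_lhs => rw [hA.spectral_theorem, rankKRange_conjStarAlgAut]
  exact rankKRange_diagonal _ hk

theorem ordConnected_setOf_le_card {n : Type*} [Fintype n] (e : n → ℝ) (k : ℕ) :
    {r | k ≤ Fintype.card {i // r ≤ e i} ∧ k ≤ Fintype.card {i // e i ≤ r}}.OrdConnected :=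
  ⟨fun _ ha _ hb _ hr =>
    ⟨hb.1.trans (Fintype.card_subtype_mono _ _ fun _ hi => hr.2.trans hi),
      ha.2.trans (Fintype.card_subtype_mono _ _ fun _ hi => hi.trans hr.1)⟩⟩

/-- for Hermitian A, Λ_k(A) is convex. -/
theorem rankKRange_hermitian_convex (N k : ℕ) (hk : 1 ≤ k)
    (A : Matrix (Fin N) (Fin N) ℂ) (hA : A.IsHermitian) :
    Convex ℝ (rankKRange k A) := by
  rw [hA.rankKRange_eq hk]
  exact (ordConnected_setOf_le_card _ k).convex.is_linear_image ofRealCLM.toLinearMap.isLinear
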